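/- Let f(n) = √(2n) + (1/6)·log n, H(n,k,f) = k + (n-k+1)f(n) + Σ_{i=n-k+1}^{n} f(i), and k*(n) = argmax_{1≤k≤n} H(n,k,f). There is a constant A > 0 such that for all n ≥ 1, √(2n) − A ≤ k*(n) ≤ √(2n) + A. -/

import Mathlib

open Finset

/-- `f n = √(2n) + (log n)/6`. -/
noncomputable def f (n : ℕ) : ℝ := Real.sqrt (2 * n) + (1 / 6) * Real.log n

/-- `H n k g = k + (n-k+1) g(n) + ∑_{i=n-k+1}^{n} g(i)`. -/
noncomputable def H (g : ℕ → ℝ) (n k : ℕ) : ℝ :=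
  (k : ℝ) + ((n : ℝ) - (k : ℝ) + 1) * g n + ∑ i ∈ Finset.Icc (n - k + 1) n, g i

/-!
Passing from `k` to `k + 1` changes `H(n, k, f)` by `1 - f(n) + f(n - k)`, so a maximizer `k`
satisfies `f(n) - f(n - k + 1) ≤ 1` (unless `k = 1`) and `1 ≤ f(n) - f(n - k)` (unless `k = n`).
Up to the logarithmic term, which is negligible at the scale `k ≈ √(2n)`, this says that
`√(2n) - √(2(n - k))` is about `1`; since `2n - 2(n - k) = 2k`, this pins `k` to `√(2n) + O(1)`.
-/

lemma H_succ (g : ℕ → ℝ) {n k : ℕ} (hk : k < n) :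
    H g n (k + 1) = H g n k + (1 - g n + g (n - k)) := by
  unfold H
  rw [show n - (k + 1) + 1 = n - k by omega,
    ← Finset.insert_Icc_add_one_left_eq_Icc (by omega : n - k ≤ n), Finset.sum_insert (by simp)]
  push_cast
  ring

section Maximizer

variable (g : ℕ → ℝ) {n k : ℕ} (hmax : ∀ j : ℕ, 1 ≤ j → j ≤ n → H g n j ≤ H g n k)
include hmax

lemma sub_le_one_of_maximizer (hk : 1 < k) (hkn : k ≤ n) : g n - g (n - k + 1) ≤ 1 := by
  have hstep := H_succ g (n := n) (k := k - 1) (by omega)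
  rw [Nat.sub_add_cancel hk.le, show n - (k - 1) = n - k + 1 by omega] at hstep
  linarith [hmax (k - 1) (by omega) (by omega)]

lemma one_le_sub_of_maximizer (hk : 1 ≤ k) (hkn : k < n) : 1 ≤ g n - g (n - k) := by
  linarith [H_succ g hkn, hmax (k + 1) (by omega) hkn]

end Maximizer

lemma sqrt_sub_sqrt_le_f_sub {m n : ℕ} (hmn : m ≤ n) :
    √(2 * n) - √(2 * m) ≤ f n - f m := by
  have hlog : Real.log m ≤ Real.log n := by
    rcases m.eq_zero_or_pos with rfl | hm
    · simpa using Real.log_natCast_nonneg n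
    · exact Real.log_le_log (by exact_mod_cast hm) (by exact_mod_cast hmn)
  unfold f
  linarith

lemma log_sub_log_le_div {x y : ℝ} (hx : 0 < x) (hy : 0 < y) :
    Real.log x - Real.log y ≤ (x - y) / y := by
  rw [← Real.log_div hx.ne' hy.ne', sub_div, div_self hy.ne']
  exact Real.log_le_sub_one_of_pos (div_pos hx hy)

lemma f_sub_le {m n : ℕ} (hm : 0 < m) (hn : 0 < n) :
    f n - f m ≤ √(2 * n) - √(2 * m) + (n - m) / (6 * m) := by
  have hlog := log_sub_log_le_div (x := n) (y := m) (by exact_mod_cast hn) (by exact_mod_cast hm)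
  have hsplit : (n - m : ℝ) / (6 * m) = (1 / 6) * ((n - m) / m) := by ring
  unfold f
  linarith

lemma sub_le_two_mul_sqrt_of_sqrt_sub_sqrt_le_one {x y : ℝ} (hy : 0 ≤ y) (hyx : y ≤ x)
    (h : √x - √y ≤ 1) : x - y ≤ 2 * √x := by
  have hsq : x - y = (√x - √y) * (√x + √y) := by
    rw [mul_comm, ← sq_sub_sq, Real.sq_sqrt (hy.trans hyx), Real.sq_sqrt hy]
  have hmono : √y ≤ √x := Real.sqrt_le_sqrt hyx
  rw [hsq]
  nlinarith [Real.sqrt_nonneg y, Real.sqrt_nonneg x]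

lemma two_mul_mul_sqrt_sub_sq_le_sub {x y δ : ℝ} (hx : 0 ≤ x) (hy : 0 ≤ y)
    (h : δ ≤ √x - √y) : 2 * δ * √x - δ ^ 2 ≤ x - y := by
  have hy' : √y ^ 2 ≤ (√x - δ) ^ 2 := pow_le_pow_left₀ (Real.sqrt_nonneg y) (by linarith) 2
  rw [Real.sq_sqrt hy] at hy'
  nlinarith [Real.sq_sqrt hx]

section

variable {n k : ℕ} (hk : 1 ≤ k) (hkn : k ≤ n)
  (hmax : ∀ j : ℕ, 1 ≤ j → j ≤ n → H f n j ≤ H f n k)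
include hk hkn hmax

lemma le_sqrt_add_one_of_maximizer : (k : ℝ) ≤ √(2 * n) + 1 := by
  rcases hk.eq_or_lt with rfl | hk1
  · simp [Real.sqrt_nonneg]
  have hstep : √(2 * n) - √(2 * ↑(n - k + 1)) ≤ 1 :=
    (sqrt_sub_sqrt_le_f_sub (by omega)).trans (sub_le_one_of_maximizer f hmax hk1 hkn)
  have hcast : ((n - k + 1 : ℕ) : ℝ) = n - k + 1 := by push_cast [Nat.cast_sub hkn]; ring
  have hk1' : (1 : ℝ) < k := by exact_mod_cast hk1
  have := sub_le_two_mul_sqrt_of_sqrt_sub_sqrt_le_one (by positivity)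
    (by rw [hcast]; linarith) hstep
  rw [hcast] at this
  linarith

lemma sqrt_sub_two_le_of_maximizer : √(2 * n) - 2 ≤ k := by
  set s := √(2 * n)
  have hs2 : s ^ 2 = 2 * n := Real.sq_sqrt (by positivity)
  by_contra! hks
  have hk1 : (1 : ℝ) ≤ k := by exact_mod_cast hk
  -- `s ^ 2 - 4 * s + 8 > 0` turns `k < s - 2` into `2 * k ≤ n`.
  have hhalf : 2 * (k : ℝ) ≤ n := by nlinarith
  have hkn' : k < n := by exact_mod_cast (show (k : ℝ) < n by linarith)
  have hcast : ((n - k : ℕ) : ℝ) = n - k := Nat.cast_sub hkn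
  have hm : (0 : ℝ) < n - k := by linarith
  set ε := (k : ℝ) / (6 * (n - k))
  have hgap : 1 - ε ≤ s - √(2 * (n - k : ℝ)) := by
    have := (one_le_sub_of_maximizer f hmax hk hkn').trans
      (f_sub_le (by omega) (by omega))
    rw [hcast, sub_sub_cancel] at this
    linarith
  have hsq := two_mul_mul_sqrt_sub_sq_le_sub (by positivity) (by positivity) hgap
  have hε0 : 0 ≤ ε := by positivity
  have hε : ε ≤ 1 / 6 := by rw [div_le_iff₀ (by positivity)]; linarith
  -- `k < s` and `n - k ≥ n / 2` give `s * ε ≤ s ^ 2 / (3 * n) = 2 / 3`.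
  have hsε : s * ε ≤ 2 / 3 := by
    rw [← mul_div_assoc, div_le_iff₀ (by positivity)]
    nlinarith [Real.sqrt_nonneg (2 * n)]
  have hδ : (1 - ε) ^ 2 ≤ 1 := by nlinarith
  linarith

end

/-- Any maximizer `k` of `k ↦ H(n,k,f)` over `1 ≤ k ≤ n` satisfies
`√(2n) - A ≤ k ≤ √(2n) + A`. -/
theorem stmt_10 :
    ∃ A : ℝ, 0 < A ∧ ∀ n : ℕ, 1 ≤ n → ∀ k : ℕ, 1 ≤ k → k ≤ n →
      (∀ j : ℕ, 1 ≤ j → j ≤ n → H f n j ≤ H f n k) →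
      Real.sqrt (2 * n) - A ≤ (k : ℝ) ∧ (k : ℝ) ≤ Real.sqrt (2 * n) + A :=
  ⟨2, two_pos, fun _ _ _ hk hkn hmax =>
    ⟨sqrt_sub_two_le_of_maximizer hk hkn hmax,
      (le_sqrt_add_one_of_maximizer hk hkn hmax).trans (by linarith)⟩⟩
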